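/- Let z ∈ ℝ^d be the unit vector with z_i = Z_d^{-1/2} i^{-1/2}, Z_d = ∑_{i=1}^d 1/i, and let t > 0. Then ⟨z, L(t) z⟩ ≥ (2t/Z_d)( ln(√(d·min(1,t²)+1) + √(d·min(1,t²)+t²)) − ln(t+1) ), where L(t)_{i,j} = λ([i-1,i)∩[(j-1)t², jt²)). -/

import Mathlib

/-!
The entry `L(t)ᵢⱼ` is the length of the cell `[i, i+1) ∩ [j t², (j+1) t²)`, and these cells cover
`[0, M)` with `M = d · min 1 t²`. On the cell of `x` we have `i ≤ x` and `j ≤ x / t²`, so the weight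
`((i+1)(j+1))^{-1/2}` of the cell dominates `t ((x+1)(x+t²))^{-1/2}`. Hence `Z_d ⟨z, L(t) z⟩` is at
least `∫₀^M t ((x+1)(x+t²))^{-1/2} dx`, and `2 log (√(x+1) + √(x+t²))` is an antiderivative of
`((x+1)(x+t²))^{-1/2}`.
-/

open MeasureTheory

noncomputable def Lmat (d : ℕ) (t : ℝ) : Matrix (Fin d) (Fin d) ℝ :=
  fun i j => (volume (Set.Ico (i : ℝ) ((i : ℝ) + 1) ∩
    Set.Ico ((j : ℝ) * t ^ 2) (((j : ℝ) + 1) * t ^ 2))).toReal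

noncomputable def Zd (d : ℕ) : ℝ := ∑ i ∈ Finset.range d, ((i : ℝ) + 1)⁻¹

noncomputable def zvec (d : ℕ) (i : Fin d) : ℝ :=
  (Real.sqrt (Zd d))⁻¹ * (Real.sqrt ((i : ℝ) + 1))⁻¹

open Set Real

theorem setIntegral_le_sum_of_le_on_cover {α ι : Type*} [MeasurableSpace α] {μ : Measure α}
    [Fintype ι] {s : ι → Set α} {U : Set α} {f : α → ℝ} {c : ι → ℝ}
    (hs : ∀ i, MeasurableSet (s i)) (hsμ : ∀ i, μ (s i) < ⊤) (hU : MeasurableSet U)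
    (hf : IntegrableOn f U μ) (hc : ∀ i, 0 ≤ c i) (hcover : U ⊆ ⋃ i, s i)
    (hfc : ∀ i, ∀ x ∈ s i, f x ≤ c i) :
    ∫ x in U, f x ∂μ ≤ ∑ i, c i * μ.real (s i) := by
  have hpt : ∀ x, U.indicator f x ≤ ∑ i, (s i).indicator (fun _ => c i) x := by
    intro x
    by_cases hx : x ∈ U
    · obtain ⟨i, hi⟩ := mem_iUnion.mp (hcover hx)
      calc U.indicator f x = f x := indicator_of_mem hx f
        _ ≤ c i := hfc i x hi
        _ = (s i).indicator (fun _ => c i) x := (indicator_of_mem hi (fun _ => c i)).symm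
        _ ≤ ∑ i, (s i).indicator (fun _ => c i) x :=
          Finset.single_le_sum (fun j _ => indicator_nonneg (fun _ _ => hc j) x)
            (Finset.mem_univ i)
    · rw [indicator_of_notMem hx]
      exact Finset.sum_nonneg fun i _ => indicator_nonneg (fun _ _ => hc i) x
  have hint : ∀ i, Integrable ((s i).indicator fun _ => c i) μ := fun i =>
    (integrableOn_const (hsμ i).ne).integrable_indicator (hs i)
  calc ∫ x in U, f x ∂μ = ∫ x, U.indicator f x ∂μ := (integral_indicator hU).symm
    _ ≤ ∫ x, ∑ i, (s i).indicator (fun _ => c i) x ∂μ :=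
      integral_mono (hf.integrable_indicator hU) (integrable_finsetSum _ fun i _ => hint i) hpt
    _ = ∑ i, c i * μ.real (s i) := by
      rw [integral_finsetSum _ fun i _ => hint i]
      simp [integral_indicator_const _ (hs _), mul_comm]

theorem hasDerivAt_log_sqrt_add_sqrt {a b x : ℝ} (ha : 0 < x + a) (hb : 0 < x + b) :
    HasDerivAt (fun r => log (√(r + a) + √(r + b))) ((√(x + a))⁻¹ * (√(x + b))⁻¹ / 2) x := by
  have hA := ((hasDerivAt_id' x).add_const a).sqrt ha.ne'
  have hB := ((hasDerivAt_id' x).add_const b).sqrt hb.ne'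
  have hApos := sqrt_pos.mpr ha
  have hBpos := sqrt_pos.mpr hb
  refine ((hA.add hB).log (add_pos hApos hBpos).ne').congr_deriv ?_
  simp only [Pi.add_apply]
  field_simp
  ring

theorem continuousOn_inv_sqrt_mul_inv_sqrt {a b : ℝ} (ha : 0 < a) (hb : 0 < b) :
    ContinuousOn (fun r => (√(r + a))⁻¹ * (√(r + b))⁻¹) (Ici 0) := by
  refine ContinuousOn.mul ?_ ?_ <;> refine ContinuousOn.inv₀ (by fun_prop) fun r hr => ?_
  · exact (sqrt_pos.mpr (add_pos_of_nonneg_of_pos hr ha)).ne'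
  · exact (sqrt_pos.mpr (add_pos_of_nonneg_of_pos hr hb)).ne'

theorem integral_inv_sqrt_mul_inv_sqrt {a b M : ℝ} (ha : 0 < a) (hb : 0 < b) (hM : 0 ≤ M) :
    ∫ r in 0..M, (√(r + a))⁻¹ * (√(r + b))⁻¹ =
      2 * (log (√(M + a) + √(M + b)) - log (√a + √b)) := by
  have hpos : ∀ r ∈ uIcc 0 M, 0 < r + a ∧ 0 < r + b := by
    intro r hr
    rw [uIcc_of_le hM] at hr
    exact ⟨by linarith [hr.1], by linarith [hr.1]⟩
  rw [intervalIntegral.integral_eq_sub_of_hasDerivAt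
    (f := fun r => 2 * log (√(r + a) + √(r + b)))
    (fun r hr => by
      simpa [mul_div_cancel₀] using
        (hasDerivAt_log_sqrt_add_sqrt (hpos r hr).1 (hpos r hr).2).const_mul 2)
    ((continuousOn_inv_sqrt_mul_inv_sqrt ha hb).mono
      (by simpa [uIcc_of_le hM] using Icc_subset_Ici_self)).intervalIntegrable]
  simp only [zero_add]
  ring

theorem Zd_nonneg (d : ℕ) : 0 ≤ Zd d :=
  Finset.sum_nonneg fun i _ => by positivity

theorem zvec_mul_zvec (d : ℕ) (i j : Fin d) :
    zvec d i * zvec d j = (Zd d)⁻¹ * ((√((i : ℝ) + 1))⁻¹ * (√((j : ℝ) + 1))⁻¹) := by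
  rw [← mul_self_sqrt (Zd_nonneg d), mul_inv, zvec, zvec]
  ring

def lmatCell (t : ℝ) (i j : ℕ) : Set ℝ :=
  Ico (i : ℝ) (i + 1) ∩ Ico (j * t ^ 2) ((j + 1) * t ^ 2)

theorem Lmat_eq_measureReal_lmatCell (d : ℕ) (t : ℝ) (i j : Fin d) :
    Lmat d t i j = volume.real (lmatCell t i j) := rfl

theorem Ico_subset_iUnion_lmatCell (d : ℕ) {t : ℝ} (ht : 0 < t) :
    Ico 0 (d * min 1 (t ^ 2)) ⊆ ⋃ p : Fin d × Fin d, lmatCell t p.1 p.2 := by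
  have ht2 : 0 < t ^ 2 := by positivity
  rintro x ⟨hx0, hxM⟩
  have hxd : x < d := hxM.trans_le (mul_le_of_le_one_right d.cast_nonneg (min_le_left _ _))
  have hxdt : x / t ^ 2 < d := (div_lt_iff₀ ht2).mpr
    (hxM.trans_le (mul_le_mul_of_nonneg_left (min_le_right _ _) d.cast_nonneg))
  refine mem_iUnion.mpr ⟨(⟨⌊x⌋₊, (Nat.floor_lt hx0).mpr hxd⟩,
    ⟨⌊x / t ^ 2⌋₊, (Nat.floor_lt (by positivity)).mpr hxdt⟩),
    ⟨Nat.floor_le hx0, Nat.lt_floor_add_one x⟩,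
    (le_div_iff₀ ht2).mp (Nat.floor_le (by positivity)),
    (div_lt_iff₀ ht2).mp (Nat.lt_floor_add_one _)⟩

theorem mul_inv_sqrt_mul_inv_sqrt_le_of_mem_lmatCell {t x : ℝ} (ht : 0 < t) {i j : ℕ}
    (hx : x ∈ lmatCell t i j) :
    t * ((√(x + 1))⁻¹ * (√(x + t ^ 2))⁻¹) ≤ (√((i : ℝ) + 1))⁻¹ * (√((j : ℝ) + 1))⁻¹ := by
  obtain ⟨⟨hix, -⟩, hjx, -⟩ := hx
  have hi : (√(x + 1))⁻¹ ≤ (√((i : ℝ) + 1))⁻¹ :=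
    inv_anti₀ (by positivity) (sqrt_le_sqrt (by linarith))
  have hj : t * (√(x + t ^ 2))⁻¹ ≤ (√((j : ℝ) + 1))⁻¹ := by
    have hsq : √((j : ℝ) + 1) * t ≤ √(x + t ^ 2) :=
      calc √((j : ℝ) + 1) * t = √(((j : ℝ) + 1) * t ^ 2) := by
            rw [sqrt_mul (by positivity), sqrt_sq ht.le]
        _ ≤ √(x + t ^ 2) := sqrt_le_sqrt (by linarith)
    calc t * (√(x + t ^ 2))⁻¹ ≤ t * (√((j : ℝ) + 1) * t)⁻¹ :=
          mul_le_mul_of_nonneg_left (inv_anti₀ (by positivity) hsq) ht.le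
      _ = (√((j : ℝ) + 1))⁻¹ := by field_simp
  calc t * ((√(x + 1))⁻¹ * (√(x + t ^ 2))⁻¹) = (√(x + 1))⁻¹ * (t * (√(x + t ^ 2))⁻¹) := by ring
    _ ≤ _ := mul_le_mul hi hj (by positivity) (by positivity)

theorem lmat_bilinear_ge_closed_form_general (d : ℕ) (t : ℝ) (ht : 0 < t) :
    (2 * t / Zd d) * (Real.log (Real.sqrt ((d : ℝ) * min 1 (t ^ 2) + 1) +
          Real.sqrt ((d : ℝ) * min 1 (t ^ 2) + t ^ 2)) - Real.log (t + 1)) ≤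
      ∑ i, ∑ j, Lmat d t i j * zvec d i * zvec d j := by
  set M : ℝ := d * min 1 (t ^ 2)
  have hM : 0 ≤ M := by positivity
  have hintegral : ∫ r in Ico 0 M, t * ((√(r + 1))⁻¹ * (√(r + t ^ 2))⁻¹) =
      2 * t * (log (√(M + 1) + √(M + t ^ 2)) - log (t + 1)) := by
    rw [integral_Ico_eq_integral_Ioc, ← intervalIntegral.integral_of_le hM,
      intervalIntegral.integral_const_mul,
      integral_inv_sqrt_mul_inv_sqrt one_pos (by positivity) hM, sqrt_one, sqrt_sq ht.le,
      add_comm 1 t]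
    ring
  have hbound := setIntegral_le_sum_of_le_on_cover (μ := volume)
    (s := fun p : Fin d × Fin d => lmatCell t p.1 p.2) (U := Ico 0 M)
    (fun _ => measurableSet_Ico.inter measurableSet_Ico)
    (fun _ => (measure_mono inter_subset_left).trans_lt measure_Ico_lt_top) measurableSet_Ico
    (((continuousOn_inv_sqrt_mul_inv_sqrt one_pos (by positivity)).mono
      Icc_subset_Ici_self).integrableOn_Icc.mono_set Ico_subset_Icc_self |>.const_mul t)
    (fun _ => by positivity) (Ico_subset_iUnion_lmatCell d ht)
    (fun _ _ hx => mul_inv_sqrt_mul_inv_sqrt_le_of_mem_lmatCell ht hx)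
  calc 2 * t / Zd d * (log (√(M + 1) + √(M + t ^ 2)) - log (t + 1))
      = (Zd d)⁻¹ * ∫ r in Ico 0 M, t * ((√(r + 1))⁻¹ * (√(r + t ^ 2))⁻¹) := by
        rw [hintegral]; ring
    _ ≤ (Zd d)⁻¹ * ∑ p : Fin d × Fin d,
          (√((p.1 : ℝ) + 1))⁻¹ * (√((p.2 : ℝ) + 1))⁻¹ * volume.real (lmatCell t p.1 p.2) :=
        mul_le_mul_of_nonneg_left hbound (inv_nonneg.mpr (Zd_nonneg d))
    _ = ∑ i, ∑ j, Lmat d t i j * zvec d i * zvec d j := by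
        rw [Finset.mul_sum, Fintype.sum_prod_type]
        refine Finset.sum_congr rfl fun i _ => Finset.sum_congr rfl fun j _ => ?_
        rw [mul_assoc (Lmat d t i j), zvec_mul_zvec, Lmat_eq_measureReal_lmatCell]
        ring

theorem lmat_bilinear_ge_closed_form (d : ℕ) (hd : 1 ≤ d) (t : ℝ) (ht : 0 < t) :
    (2 * t / Zd d) * (Real.log (Real.sqrt ((d : ℝ) * min 1 (t ^ 2) + 1) +
          Real.sqrt ((d : ℝ) * min 1 (t ^ 2) + t ^ 2)) - Real.log (t + 1)) ≤
      ∑ i, ∑ j, Lmat d t i j * zvec d i * zvec d j :=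
  lmat_bilinear_ge_closed_form_general d t ht
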